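/- For any finite disjoint sets G and H with real values Z_g, score(G ∪ H) ≤ score(G) + score(H), where score(S) = min over splits S₊ ⊔ S₋ = S of (Σ_{S₊} Z_g − Σ_{S₋} Z_g)². -/
import Mathlib


/-- The optimal balancing loss of a geo set `G`. -/
noncomputable def score {α : Type*} [DecidableEq α] (Z : α → ℝ) (G : Finset α) : ℝ :=
  G.powerset.inf' ⟨∅, Finset.empty_mem_powerset G⟩
    (fun S => ((∑ g ∈ S, Z g) - ∑ g ∈ G \ S, Z g) ^ 2)

/-- Subadditivity of the balancing score: for disjoint `G` and `H`,
`score(G ∪ H) ≤ score(G) + score(H)`. -/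
theorem score_subadditive {α : Type*} [DecidableEq α] (Z : α → ℝ)
    (G H : Finset α) (hGH : Disjoint G H) :
    score Z (G ∪ H) ≤ score Z G + score Z H := by
  obtain ⟨S, hSmem, hSeq⟩ := Finset.exists_mem_eq_inf' (⟨∅, Finset.empty_mem_powerset G⟩ :
    G.powerset.Nonempty) (fun S => ((∑ g ∈ S, Z g) - ∑ g ∈ G \ S, Z g) ^ 2)
  obtain ⟨T, hTmem, hTeq⟩ := Finset.exists_mem_eq_inf' (⟨∅, Finset.empty_mem_powerset H⟩ :
    H.powerset.Nonempty) (fun S => ((∑ g ∈ S, Z g) - ∑ g ∈ H \ S, Z g) ^ 2)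
  rw [Finset.mem_powerset] at hSmem hTmem
  set dG : ℝ := (∑ g ∈ S, Z g) - ∑ g ∈ G \ S, Z g with hdG
  set dH : ℝ := (∑ g ∈ T, Z g) - ∑ g ∈ H \ T, Z g with hdH
  have hscoreG : score Z G = dG ^ 2 := hSeq
  have hscoreH : score Z H = dH ^ 2 := hTeq
  have key : ∀ T' : Finset α, T' ⊆ H →
      score Z (G ∪ H) ≤ ((∑ g ∈ S, Z g) + (∑ g ∈ T', Z g)
        - ((∑ g ∈ G \ S, Z g) + (∑ g ∈ H \ T', Z g))) ^ 2 := by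
    intro T' hT'
    have hU : S ∪ T' ⊆ G ∪ H := Finset.union_subset_union hSmem hT'
    have hle := Finset.inf'_le (fun U => ((∑ g ∈ U, Z g) - ∑ g ∈ (G ∪ H) \ U, Z g) ^ 2)
      (Finset.mem_powerset.mpr hU)
    refine hle.trans_eq ?_
    have hdisj1 : Disjoint S T' := hGH.mono hSmem hT'
    have hdisj2 : Disjoint (G \ S) (H \ T') :=
      hGH.mono (Finset.sdiff_subset) (Finset.sdiff_subset)
    have hsd : (G ∪ H) \ (S ∪ T') = (G \ S) ∪ (H \ T') := by
      ext x
      simp only [Finset.mem_sdiff, Finset.mem_union]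
      have h1 : x ∈ G → x ∉ H := fun h => Finset.disjoint_left.mp hGH h
      have h2 : x ∈ T' → x ∈ H := fun h => hT' h
      have h3 : x ∈ S → x ∈ G := fun h => hSmem h
      tauto
    rw [Finset.sum_union hdisj1, hsd, Finset.sum_union hdisj2]
  have hcross : score Z (G ∪ H) ≤ dG ^ 2 + dH ^ 2 := by
    rcases le_or_gt (dG * dH) 0 with hc | hc
    · have := key T hTmem
      have h2 : (∑ g ∈ S, Z g) + (∑ g ∈ T, Z g)
          - ((∑ g ∈ G \ S, Z g) + (∑ g ∈ H \ T, Z g)) = dG + dH := by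
        rw [hdG, hdH]; ring
      rw [h2] at this
      nlinarith [this, hc]
    · have := key (H \ T) (Finset.sdiff_subset)
      rw [Finset.sdiff_sdiff_eq_self hTmem] at this
      have h2 : (∑ g ∈ S, Z g) + (∑ g ∈ H \ T, Z g)
          - ((∑ g ∈ G \ S, Z g) + (∑ g ∈ T, Z g)) = dG - dH := by
        rw [hdG, hdH]; ring
      rw [h2] at this
      nlinarith [this, hc]
  rw [hscoreG, hscoreH]
  exact hcross
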